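/- arXiv:2505.03091 — 6 statements merged into one kernel-verified Lean document; each statement's English description precedes it below -/
import Mathlib

section
/- Let m ≥ 1 and let H be the Hilbert space ℓ² of square-summable complex families indexed by ℤ^m. Let l : ℤ^m → ℂ and let G : H →L[ℂ] H be a bounded linear operator; write G_{n,k} := (G e_k) n. Assume that for every n ∈ ℤ^m the row (G_{n,k})_{k ∈ ℤ^m} is absolutely summable. Suppose λ ∈ ℂ and u ∈ H with u ≠ 0 satisfy l n * u n + (G u) n = λ * u n for every n ∈ ℤ^m. Then there exists n₀ ∈ ℤ^m such that |λ − (l n₀ + G_{n₀,n₀})| ≤ ∑_{k ≠ n₀} |G_{n₀,k}|. -/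
/-!
Take an index `n₀` where `|u n|` is maximal; it exists because `u ∈ ℓ²` tends to zero along the
cofinite filter, and `u n₀ ≠ 0`. Row `n₀` of the eigenvalue equation, with the diagonal term moved
to the right, reads `∑_{k ≠ n₀} G_{n₀,k} u k = (λ - l n₀ - G_{n₀,n₀}) u n₀`; bounding each `|u k|`
by `|u n₀|` and dividing by `|u n₀|` gives the Gershgorin estimate.
-/

open Filter Set Topology
open scoped ENNReal

theorem Filter.Tendsto.exists_forall_le_of_lt {ι α : Type*} [TopologicalSpace α] [LinearOrder α]
    [ClosedIciTopology α] {f : ι → α} {a : α} (hf : Tendsto f cofinite (𝓝 a)) {i : ι}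
    (hi : a < f i) : ∃ i₀, ∀ j, f j ≤ f i₀ := by
  obtain ⟨M, hM, hMmax⟩ :=
    hf.isCompact_insert_range_of_cofinite.exists_isGreatest (insert_nonempty a (range f))
  rcases hM with rfl | ⟨i₀, rfl⟩
  · exact absurd (hMmax (mem_insert_of_mem _ ⟨i, rfl⟩)) hi.not_ge
  · exact ⟨i₀, fun j => hMmax (mem_insert_of_mem _ ⟨j, rfl⟩)⟩

namespace lp

variable {ι : Type*} {p : ℝ≥0∞} [Fact (1 ≤ p)]

theorem exists_ne_zero_forall_norm_apply_le {E : ι → Type*} [∀ i, NormedAddCommGroup (E i)]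
    (hp : p ≠ ∞) {u : lp E p} (hu : u ≠ 0) : ∃ n₀, u n₀ ≠ 0 ∧ ∀ n, ‖u n‖ ≤ ‖u n₀‖ := by
  obtain ⟨i, hi⟩ : ∃ i, u i ≠ 0 := by
    by_contra! h
    exact hu (lp.ext (funext h))
  have hp₀ : 0 < p.toReal := ENNReal.toReal_pos (zero_lt_one.trans_le Fact.out).ne' hp
  obtain ⟨n₀, hn₀⟩ := ((lp.memℓp u).summable hp₀).tendsto_cofinite_zero.exists_forall_le_of_lt
    (Real.rpow_pos_of_pos (norm_pos_iff.2 hi) p.toReal)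
  have hmax : ∀ n, ‖u n‖ ≤ ‖u n₀‖ := fun n =>
    (Real.rpow_le_rpow_iff (norm_nonneg _) (norm_nonneg _) hp₀).1 (hn₀ n)
  exact ⟨n₀, norm_pos_iff.1 ((norm_pos_iff.2 hi).trans_le (hmax i)), hmax⟩

variable [DecidableEq ι] {𝕜 : Type*} [NormedField 𝕜]

theorem hasSum_smul_map_single {F : Type*} [NormedAddCommGroup F] [NormedSpace 𝕜 F]
    (hp : p ≠ ∞) (G : lp (fun _ : ι => 𝕜) p →L[𝕜] F) (u : lp (fun _ : ι => 𝕜) p) :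
    HasSum (fun k => u k • G (lp.single p k 1)) (G u) := by
  simpa only [← map_smul, ← lp.single_smul, smul_eq_mul, mul_one] using
    G.hasSum (lp.hasSum_single hp u)

theorem hasSum_apply_single_mul {κ : Type*} {q : ℝ≥0∞} [Fact (1 ≤ q)] (hp : p ≠ ∞)
    (G : lp (fun _ : ι => 𝕜) p →L[𝕜] lp (fun _ : κ => 𝕜) q) (u : lp (fun _ : ι => 𝕜) p)
    (n : κ) : HasSum (fun k => G (lp.single p k 1) n * u k) (G u n) := by
  have h : HasSum (fun k => u k * G (lp.single p k 1) n) (G u n) := by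
    have h := (lp.evalCLM 𝕜 (fun _ : κ => 𝕜) q n).hasSum (hasSum_smul_map_single hp G u)
    simp only [map_smul, smul_eq_mul] at h
    exact h
  simpa only [mul_comm] using h

end lp

theorem norm_sub_le_tsum_norm_ne_of_hasSum {ι 𝕜 : Type*} [NormedRing 𝕜] [NormMulClass 𝕜]
    {a x : ι → 𝕜} {μ : 𝕜} {n₀ : ι} (hmax : ∀ k, ‖x k‖ ≤ ‖x n₀‖) (hx : x n₀ ≠ 0)
    (ha : Summable fun k => ‖a k‖) (hsum : HasSum (fun k => a k * x k) (μ * x n₀)) :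
    ‖μ - a n₀‖ ≤ ∑' k : {k // k ≠ n₀}, ‖a k‖ := by
  have hoff : HasSum (fun k : {k // k ≠ n₀} => a k * x k) ((μ - a n₀) * x n₀) := by
    rw [sub_mul]
    refine (hasSum_singleton n₀ fun k => a k * x k).hasSum_compl_iff
      (f := fun k => a k * x k) |>.2 ?_
    rwa [add_sub_cancel]
  have hbound : HasSum (fun k : {k // k ≠ n₀} => ‖a k‖ * ‖x n₀‖)
      ((∑' k : {k // k ≠ n₀}, ‖a k‖) * ‖x n₀‖) :=
    (ha.subtype _).hasSum.mul_right _
  refine le_of_mul_le_mul_right ?_ (norm_pos_iff.2 hx)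
  rw [← norm_mul]
  exact hoff.norm_le_of_bounded hbound fun k => by
    rw [norm_mul]
    exact mul_le_mul_of_nonneg_left (hmax k) (norm_nonneg _)

theorem gershgorin_l2_diagonal_plus_bounded_general
    (m : ℕ)
    (l : (Fin m → ℤ) → ℂ)
    (G : lp (fun _ : (Fin m → ℤ) => ℂ) 2 →L[ℂ] lp (fun _ : (Fin m → ℤ) => ℂ) 2)
    (hrow : ∀ n : Fin m → ℤ,
      Summable (fun k : Fin m → ℤ => ‖(G (lp.single 2 k 1)) n‖))
    (lam : ℂ) (u : lp (fun _ : (Fin m → ℤ) => ℂ) 2) (hu : u ≠ 0)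
    (heig : ∀ n : Fin m → ℤ, l n * u n + (G u) n = lam * u n) :
    ∃ n₀ : Fin m → ℤ,
      ‖lam - (l n₀ + (G (lp.single 2 n₀ 1)) n₀)‖ ≤
        ∑' k : {k : Fin m → ℤ // k ≠ n₀}, ‖(G (lp.single 2 (k : Fin m → ℤ) 1)) n₀‖ := by
  obtain ⟨n₀, hu₀, hmax⟩ := lp.exists_ne_zero_forall_norm_apply_le ENNReal.ofNat_ne_top hu
  have hrow₀ := lp.hasSum_apply_single_mul ENNReal.ofNat_ne_top G u n₀
  rw [show G u n₀ = (lam - l n₀) * u n₀ by linear_combination heig n₀] at hrow₀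
  refine ⟨n₀, ?_⟩
  simpa only [sub_sub] using norm_sub_le_tsum_norm_ne_of_hasSum hmax hu₀ (hrow n₀) hrow₀

/-- Generalized Gershgorin eigenvalue localization on ℓ²(ℤ^m): any eigenvalue of the
operator `u ↦ (n ↦ l n * u n) + G u` lies in some Gershgorin disk centered at the
diagonal entry `l n₀ + G_{n₀,n₀}` with radius the off-diagonal absolute row sum. -/
theorem gershgorin_l2_diagonal_plus_bounded
    (m : ℕ) (hm : 1 ≤ m)
    (l : (Fin m → ℤ) → ℂ)
    (G : lp (fun _ : (Fin m → ℤ) => ℂ) 2 →L[ℂ] lp (fun _ : (Fin m → ℤ) => ℂ) 2)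
    (hrow : ∀ n : Fin m → ℤ,
      Summable (fun k : Fin m → ℤ => ‖(G (lp.single 2 k 1)) n‖))
    (lam : ℂ) (u : lp (fun _ : (Fin m → ℤ) => ℂ) 2) (hu : u ≠ 0)
    (heig : ∀ n : Fin m → ℤ, l n * u n + (G u) n = lam * u n) :
    ∃ n₀ : Fin m → ℤ,
      ‖lam - (l n₀ + (G (lp.single 2 n₀ 1)) n₀)‖ ≤
        ∑' k : {k : Fin m → ℤ // k ≠ n₀}, ‖(G (lp.single 2 (k : Fin m → ℤ) 1)) n₀‖ :=
  gershgorin_l2_diagonal_plus_bounded_general m l G hrow lam u hu heig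
end

section
/- Let m ≥ 1, N ∈ ℕ, E = {n ∈ ℤ^m : ∀ i, |n i| ≤ N}, and on the Hilbert space ℓ² of square-summable complex families indexed by ℤ^m let π^N be the coordinate projection onto E, π_N = id − π^N, and let Q, Q' be bounded operators with Q = π^N ∘ Q ∘ π^N, Q' = π^N ∘ Q' ∘ π^N, Q ∘ Q' = π^N and Q' ∘ Q = π^N. Let l : ℤ^m → ℂ be arbitrary and let G be a bounded operator on ℓ². Set P := Q + π_N and, for k ∈ ℤ^m, define the k-th column of the pseudo-diagonalized operator by 𝒟ₖ := (Q' + π_N)(L(P e_k) + G(P e_k)), where L acts diagonally by (L v) n = l n * v n (well defined since P e_k = Q e_k is finitely supported when k ∈ E and P e_k = e_k when k ∉ E). Then: (a) for n ∈ E and k ∉ E, 𝒟ₖ n = (Q' (G e_k)) n; (b) for n ∉ E and k ∈ E, 𝒟ₖ n = (G (Q e_k)) n; (c) for n, k ∉ E with n ≠ k, 𝒟ₖ n = (G e_k) n; (d) for n ∉ E, 𝒟ₙ n = l n + (G e_n) n. -/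
/-- Matrix entries of the pseudo-diagonalized operator `𝒟 = P⁻¹ (L + G) P` outside the
finite block `E = {n : ∀ i, |n i| ≤ N}`: they involve only the bounded perturbation `G`
(not the diagonal part `L`), and the far diagonal entries are `l n + G_{n,n}`. -/
theorem pseudoDiagonalization_entries
    (m : ℕ) (hm : 1 ≤ m) (N : ℕ)
    (πN : lp (fun _ : (Fin m → ℤ) => ℂ) 2 →L[ℂ] lp (fun _ : (Fin m → ℤ) => ℂ) 2)
    (hπ : ∀ (u : lp (fun _ : (Fin m → ℤ) => ℂ) 2) (n : Fin m → ℤ),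
      (πN u) n = if ∀ i, |n i| ≤ (N : ℤ) then u n else 0)
    (Q Q' : lp (fun _ : (Fin m → ℤ) => ℂ) 2 →L[ℂ] lp (fun _ : (Fin m → ℤ) => ℂ) 2)
    (hQ : Q = πN ∘L Q ∘L πN) (hQ' : Q' = πN ∘L Q' ∘L πN)
    (hQQ' : Q ∘L Q' = πN) (hQ'Q : Q' ∘L Q = πN)
    (l : (Fin m → ℤ) → ℂ)
    (G : lp (fun _ : (Fin m → ℤ) => ℂ) 2 →L[ℂ] lp (fun _ : (Fin m → ℤ) => ℂ) 2)
    (P : lp (fun _ : (Fin m → ℤ) => ℂ) 2 →L[ℂ] lp (fun _ : (Fin m → ℤ) => ℂ) 2)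
    (hP : P = Q + (1 - πN))
    -- `D k` is the k-th column of `𝒟 = P⁻¹ (L + G) P`: there is `w ∈ ℓ²` representing
    -- `L (P e_k) + G (P e_k)` (well defined since `P e_k` is finitely supported for `k ∈ E`
    -- and `P e_k = e_k` for `k ∉ E`), and `D k = (Q' + (id - πN)) w`.
    (D : (Fin m → ℤ) → lp (fun _ : (Fin m → ℤ) => ℂ) 2)
    (hD : ∀ k : Fin m → ℤ, ∃ w : lp (fun _ : (Fin m → ℤ) => ℂ) 2,
      (∀ j : Fin m → ℤ,
        w j = l j * (P (lp.single 2 k 1)) j + (G (P (lp.single 2 k 1))) j) ∧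
      D k = (Q' + (1 - πN)) w) :
    (∀ n k : Fin m → ℤ, (∀ i, |n i| ≤ (N : ℤ)) → ¬ (∀ i, |k i| ≤ (N : ℤ)) →
        (D k) n = (Q' (G (lp.single 2 k 1))) n) ∧
    (∀ n k : Fin m → ℤ, ¬ (∀ i, |n i| ≤ (N : ℤ)) → (∀ i, |k i| ≤ (N : ℤ)) →
        (D k) n = (G (Q (lp.single 2 k 1))) n) ∧
    (∀ n k : Fin m → ℤ, ¬ (∀ i, |n i| ≤ (N : ℤ)) → ¬ (∀ i, |k i| ≤ (N : ℤ)) → n ≠ k →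
        (D k) n = (G (lp.single 2 k 1)) n) ∧
    (∀ n : Fin m → ℤ, ¬ (∀ i, |n i| ≤ (N : ℤ)) →
        (D n) n = l n + (G (lp.single 2 n 1)) n) := by
  classical
  -- pointwise value of the standard unit vector
  have hs : ∀ k j : Fin m → ℤ,
      (lp.single 2 k (1 : ℂ) : lp (fun _ : (Fin m → ℤ) => ℂ) 2) j
        = if j = k then 1 else 0 := by
    intro k j
    rw [lp.single_apply]
    by_cases h : j = k <;> simp [h]
  -- `πN` kills unit vectors outside the box
  have hπ0 : ∀ k : Fin m → ℤ, ¬ (∀ i, |k i| ≤ (N : ℤ)) →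
      πN (lp.single 2 k 1) = 0 := by
    intro k hk
    apply lp.ext
    funext j
    rw [hπ, lp.coeFn_zero, Pi.zero_apply]
    split
    · rename_i hj
      rw [hs]
      rw [if_neg]
      rintro rfl; exact hk hj
    · rfl
  -- `πN` fixes unit vectors inside the box
  have hπ1 : ∀ k : Fin m → ℤ, (∀ i, |k i| ≤ (N : ℤ)) →
      πN (lp.single 2 k 1) = lp.single 2 k 1 := by
    intro k hk
    apply lp.ext
    funext j
    rw [hπ]
    split
    · rfl
    · rename_i hj
      rw [hs, if_neg]
      rintro rfl; exact hj hk
  -- `Q'` vanishes pointwise outside the box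
  have hQ'out : ∀ (u : lp (fun _ : (Fin m → ℤ) => ℂ) 2) (n : Fin m → ℤ),
      ¬ (∀ i, |n i| ≤ (N : ℤ)) → (Q' u) n = 0 := by
    intro u n hn
    rw [hQ']
    simp only [ContinuousLinearMap.comp_apply]
    rw [hπ, if_neg hn]
  -- `Q e_k = 0` for `k` outside the box
  have hQ0 : ∀ k : Fin m → ℤ, ¬ (∀ i, |k i| ≤ (N : ℤ)) →
      Q (lp.single 2 k 1) = 0 := by
    intro k hk
    rw [hQ]
    simp only [ContinuousLinearMap.comp_apply, hπ0 k hk, map_zero]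
  -- `Q' e_k = 0` for `k` outside the box
  have hQ'0 : ∀ k : Fin m → ℤ, ¬ (∀ i, |k i| ≤ (N : ℤ)) →
      Q' (lp.single 2 k 1) = 0 := by
    intro k hk
    rw [hQ']
    simp only [ContinuousLinearMap.comp_apply, hπ0 k hk, map_zero]
  -- `P e_k = e_k` for `k` outside the box
  have hPout : ∀ k : Fin m → ℤ, ¬ (∀ i, |k i| ≤ (N : ℤ)) →
      P (lp.single 2 k 1) = lp.single 2 k 1 := by
    intro k hk
    rw [hP]
    simp only [ContinuousLinearMap.add_apply, ContinuousLinearMap.sub_apply,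
      ContinuousLinearMap.one_apply, hQ0 k hk, hπ0 k hk, zero_add, sub_zero]
  -- `P e_k = Q e_k` for `k` inside the box
  have hPin : ∀ k : Fin m → ℤ, (∀ i, |k i| ≤ (N : ℤ)) →
      P (lp.single 2 k 1) = Q (lp.single 2 k 1) := by
    intro k hk
    rw [hP]
    simp only [ContinuousLinearMap.add_apply, ContinuousLinearMap.sub_apply,
      ContinuousLinearMap.one_apply, hπ1 k hk, sub_self, add_zero]
  -- pointwise value of `D k`
  have hDval : ∀ (k : Fin m → ℤ) (w : lp (fun _ : (Fin m → ℤ) => ℂ) 2),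
      D k = (Q' + (1 - πN)) w → ∀ n, (D k) n = (Q' w) n + w n - (πN w) n := by
    intro k w hw n
    rw [hw]
    simp only [ContinuousLinearMap.add_apply, ContinuousLinearMap.sub_apply,
      ContinuousLinearMap.one_apply, lp.coeFn_add, lp.coeFn_sub, Pi.add_apply, Pi.sub_apply]
    ring
  refine ⟨?_, ?_, ?_, ?_⟩
  · -- (a) n ∈ E, k ∉ E
    intro n k hn hk
    obtain ⟨w, hw1, hw2⟩ := hD k
    -- w = l k • e_k + G e_k
    have hweq : w = l k • lp.single 2 k 1 + G (lp.single 2 k 1) := by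
      apply lp.ext
      funext j
      rw [lp.coeFn_add, Pi.add_apply, lp.coeFn_smul, Pi.smul_apply, hw1 j, hPout k hk, hs]
      by_cases h : j = k
      · subst h; simp
      · simp [hs, h]
    rw [hDval k w hw2 n, hπ, if_pos hn, hweq]
    simp only [map_add, map_smul, hQ'0 k hk, smul_zero, zero_add]
    ring
  · -- (b) n ∉ E, k ∈ E
    intro n k hn hk
    obtain ⟨w, hw1, hw2⟩ := hD k
    rw [hDval k w hw2 n, hQ'out w n hn, hπ, if_neg hn, hw1 n, hPin k hk]
    have : (Q (lp.single 2 k 1)) n = 0 := by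
      rw [hQ]
      simp only [ContinuousLinearMap.comp_apply]
      rw [hπ, if_neg hn]
    rw [this, mul_zero]
    ring
  · -- (c) n, k ∉ E, n ≠ k
    intro n k hn hk hnk
    obtain ⟨w, hw1, hw2⟩ := hD k
    rw [hDval k w hw2 n, hQ'out w n hn, hπ, if_neg hn, hw1 n, hPout k hk, hs, if_neg hnk]
    ring
  · -- (d) diagonal, n ∉ E
    intro n hn
    obtain ⟨w, hw1, hw2⟩ := hD n
    rw [hDval n w hw2 n, hQ'out w n hn, hπ, if_neg hn, hw1 n, hPout n hn, hs, if_pos rfl]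
    ring
end

section
/- Define m₁/₂ : ℝ → ℝ by m₁/₂(x) = Real.sqrt (Real.tanh x * (1 + x²/2) / x) for x ≠ 0 and m₁/₂(0) = 1. Then Set.range m₁/₂ = Set.Ici 1, i.e., the range of m₁/₂ is exactly the interval [1, ∞). -/
/-!
Write `m_T(x)² = (tanh x / x) (1 + T x²)`. For `x ≠ 0` the inequality `m_T(x)² ≥ 1` is
`x · h(x) ≥ 0` with `h(x) = sinh x (1 + T x²) - x cosh x`; since `h(0) = 0` and
`h'(x) = T x² cosh x + (2T - 1) x sinh x ≥ 0` for `T ≥ 1/2`, `h` has the sign of `x`.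
At `0` the symbol equals `1`, and for `x ≥ 1` we have `tanh x ≥ 1/2`, so `m_T(x)² ≥ T x / 2`
is unbounded; continuity and the intermediate value theorem give every value in `[1, ∞)`.
-/

open Real Set Filter Topology

theorem Differentiable.continuous_dslope {𝕜 E : Type*} [NontriviallyNormedField 𝕜]
    [NormedAddCommGroup E] [NormedSpace 𝕜 E] {f : 𝕜 → E} (hf : Differentiable 𝕜 f) (a : 𝕜) :
    Continuous (dslope f a) :=
  continuousOn_univ.mp <| (continuousOn_dslope univ_mem).mpr
    ⟨hf.continuous.continuousOn, hf a⟩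

namespace Whitham

/-- The squared symbol `m_T(x)² = tanh x * (1 + T x²) / x`, with `tanh x / x` written as
`dslope sinh 0 x / cosh x` so that the removable singularity at `0` is filled in. -/
noncomputable def symbolSq (T x : ℝ) : ℝ := dslope sinh 0 x / cosh x * (1 + T * x ^ 2)

variable {T : ℝ}

@[simp]
theorem symbolSq_zero : symbolSq T 0 = 1 := by
  simp [symbolSq, dslope_same]

theorem symbolSq_of_ne {x : ℝ} (hx : x ≠ 0) :
    symbolSq T x = tanh x * (1 + T * x ^ 2) / x := by
  rw [symbolSq, dslope_of_ne _ hx, slope_def_field, tanh_eq_sinh_div_cosh]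
  simp only [sinh_zero, sub_zero]
  field_simp

theorem continuous_symbolSq : Continuous (symbolSq T) := by
  unfold symbolSq
  have hslope := differentiable_sinh.continuous_dslope 0
  fun_prop (disch := exact fun x => (cosh_pos x).ne')

theorem monotone_sinh_mul_sub_mul_cosh (hT : 1 / 2 ≤ T) :
    Monotone fun x => sinh x * (1 + T * x ^ 2) - x * cosh x := by
  have hderiv (x : ℝ) : HasDerivAt (fun x => sinh x * (1 + T * x ^ 2) - x * cosh x)
      (T * x ^ 2 * cosh x + (2 * T - 1) * (x * sinh x)) x := by
    refine ((hasDerivAt_sinh x).fun_mul (((hasDerivAt_pow 2 x).const_mul T).const_add 1)).fun_sub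
      ((hasDerivAt_id' x).fun_mul (hasDerivAt_cosh x)) |>.congr_deriv ?_
    push_cast
    ring
  refine monotone_of_deriv_nonneg (fun x => (hderiv x).differentiableAt) fun x => ?_
  have hx : 0 ≤ x * sinh x := by
    rcases le_total 0 x with h | h
    · exact mul_nonneg h (sinh_nonneg_iff.mpr h)
    · exact mul_nonneg_of_nonpos_of_nonpos h (sinh_nonpos_iff.mpr h)
  rw [(hderiv x).deriv]
  have hcosh := cosh_pos x
  have hT' : 0 ≤ 2 * T - 1 := by linarith
  positivity

theorem one_le_symbolSq (hT : 1 / 2 ≤ T) (x : ℝ) : 1 ≤ symbolSq T x := by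
  rcases eq_or_ne x 0 with rfl | hx
  · simp
  set h := fun x => sinh x * (1 + T * x ^ 2) - x * cosh x
  have h_zero : h 0 = 0 := by simp [h]
  have hmono : Monotone h := monotone_sinh_mul_sub_mul_cosh hT
  have hsign : 0 ≤ x * h x := by
    rcases le_total 0 x with hpos | hneg
    · exact mul_nonneg hpos (h_zero ▸ hmono hpos)
    · exact mul_nonneg_of_nonpos_of_nonpos hneg (h_zero ▸ hmono hneg)
  have hdiff : symbolSq T x - 1 = x * h x / (x ^ 2 * cosh x) := by
    rw [symbolSq_of_ne hx, tanh_eq_sinh_div_cosh]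
    field_simp [(cosh_pos x).ne']
    ring
  have hcosh := cosh_pos x
  rw [← sub_nonneg, hdiff]
  positivity

theorem half_le_tanh {x : ℝ} (hx : 1 ≤ x) : 1 / 2 ≤ tanh x := by
  have hsinh : 1 ≤ sinh x := hx.trans (self_le_sinh_iff.mpr (by linarith))
  have hcosh : cosh x ≤ sinh x + 1 := by
    have hdiff := cosh_sub_sinh x
    have hexp : exp (-x) ≤ 1 := exp_le_one_iff.mpr (by linarith)
    linarith
  rw [tanh_eq_sinh_div_cosh, le_div_iff₀ (cosh_pos x)]
  linarith

theorem tendsto_symbolSq_atTop (hT : 0 < T) : Tendsto (symbolSq T) atTop atTop := by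
  refine tendsto_atTop_mono' _ ?_ (tendsto_id.const_mul_atTop (by positivity : 0 < T / 2))
  filter_upwards [eventually_ge_atTop 1] with x hx
  have hx0 : 0 < x := by linarith
  rw [symbolSq_of_ne hx0.ne', le_div_iff₀ hx0]
  have htanh := half_le_tanh hx
  simp only [id]
  nlinarith [mul_le_mul_of_nonneg_right htanh (by positivity : 0 ≤ 1 + T * x ^ 2)]

theorem range_sqrt_symbolSq (hT : 1 / 2 ≤ T) :
    range (fun x => √(symbolSq T x)) = Ici 1 := by
  refine (range_subset_iff.mpr fun x => ?_).antisymm ?_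
  · exact one_le_sqrt.mpr (one_le_symbolSq hT x)
  · have hcont : Continuous fun x => √(symbolSq T x) := continuous_symbolSq.sqrt
    have := intermediate_value_Ici (a := 0) hcont.continuousOn
      (tendsto_sqrt_atTop.comp (tendsto_symbolSq_atTop (by linarith)))
    simpa using this.trans (image_subset_range _ _)

end Whitham

/-- The range of the Whitham symbol `m_{1/2}(x) = sqrt(tanh x * (1 + x²/2) / x)` (extended by
`m_{1/2}(0) = 1`) is exactly `[1, ∞)`. -/
theorem range_whitham_symbol :
    Set.range (fun x : ℝ =>
        if x = 0 then (1 : ℝ) else Real.sqrt (Real.tanh x * (1 + x ^ 2 / 2) / x))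
      = Set.Ici 1 := by
  convert Whitham.range_sqrt_symbolSq (T := 1 / 2) le_rfl using 3 with x
  rcases eq_or_ne x 0 with rfl | hx
  · simp
  · rw [if_neg hx, Whitham.symbolSq_of_ne hx]
    ring_nf
end

section
/- Let λ₁ = 1/9 and λ₂ = 10. Then ⋃_{t ∈ Set.Ici (0:ℝ)} spectrum ℝ (M t) = Set.Iic (−1), where M t : Matrix (Fin 2) (Fin 2) ℝ is the matrix with rows (−λ₁·t − 1, 0) and (λ₁·λ₂ − 1, −t − λ₂), i.e. !![−t/9 − 1, 0; 1/9, −t − 10]. -/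
lemma grayScott_mem_spectrum_iff (t x : ℝ) :
    x ∈ spectrum ℝ (!![-t / 9 - 1, 0; 1 / 9, -t - 10] : Matrix (Fin 2) (Fin 2) ℝ)
      ↔ x = -t/9 - 1 ∨ x = -t - 10 := by
  rw [spectrum.mem_iff, Matrix.isUnit_iff_isUnit_det, isUnit_iff_ne_zero, not_not]
  have : (algebraMap ℝ (Matrix (Fin 2) (Fin 2) ℝ) x - !![-t / 9 - 1, 0; 1 / 9, -t - 10])
      = !![x + t/9 + 1, 0; -(1/9), x + t + 10] := by
    rw [Matrix.algebraMap_eq_diagonal]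
    ext i j
    fin_cases i <;> fin_cases j <;> simp [Matrix.diagonal] <;> ring
  rw [this, Matrix.det_fin_two_of]
  constructor
  · intro h
    rcases mul_eq_zero.mp (by linarith [h] : (x + t/9 + 1) * (x + t + 10) = 0) with h | h
    · left; linarith
    · right; linarith
  · rintro (h | h) <;> subst h <;> ring

/-- For the Gray–Scott parameters `λ₁ = 1/9`, `λ₂ = 10`, the union over `t ≥ 0` of the
spectra of the symbol matrices `!![-t/9 - 1, 0; 1/9, -t - 10]` equals `(-∞, -1]`. -/
theorem grayScott_essential_spectrum :
    (⋃ t ∈ Set.Ici (0 : ℝ),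
        spectrum ℝ (!![-t / 9 - 1, 0; 1 / 9, -t - 10] : Matrix (Fin 2) (Fin 2) ℝ))
      = Set.Iic (-1) := by
  ext x
  simp only [Set.mem_iUnion, Set.mem_Ici, Set.mem_Iic, grayScott_mem_spectrum_iff]
  constructor
  · rintro ⟨t, ht, h | h⟩ <;> linarith
  · intro hx
    exact ⟨-9 * (x + 1), by linarith, Or.inl (by ring)⟩
end

section
/- Let n ∈ ℕ and A : Matrix (Fin n) (Fin n) ℂ. For each i : Fin n set λ_i := A i i, r_i := ∑_{j ≠ i} |A i j|, and D_i := Metric.closedBall λ_i r_i ⊆ ℂ. Let S : Finset (Fin n) be such that (⋃_{i ∈ S} D_i) ∩ (⋃_{i ∉ S} D_i) = ∅. Then the number of roots of the characteristic polynomial of A lying in ⋃_{i ∈ S} D_i, counted with multiplicity, equals S.card; that is, (A.charpoly.roots.filter (fun z => z ∈ ⋃_{i ∈ S} D_i)).card = S.card. -/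
/-!
Deform `A` to its diagonal by scaling the off-diagonal entries by `t ∈ [0, 1]`. The Gershgorin
disks of every intermediate matrix lie inside those of `A`, so its eigenvalues never leave the
union of the two separated families of disks. The roots of a monic polynomial of fixed degree
depend continuously on it (a limit of root vectors along a subsequence is a root vector of the
limit), so the number of eigenvalues in the first family is a continuous `ℕ`-valued function on
the connected interval `[0, 1]`, hence constant. At `t = 0` the eigenvalues are the diagonal
entries, and `A i i` lies in the first family exactly when `i ∈ S`.
-/

open Filter Topology Polynomial Finset Matrix

theorem Multiset.exists_eq_map_univ_fin {α : Type*} {n : ℕ} {m : Multiset α}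
    (h : card m = n) : ∃ w : Fin n → α, m = univ.val.map w := by
  obtain ⟨l, rfl⟩ : ∃ l : List α, m = l := ⟨m.toList, m.coe_toList.symm⟩
  rw [Multiset.coe_card] at h
  subst h
  exact ⟨l.get, by rw [Fin.univ_val_map, List.ofFn_get]⟩

theorem Filter.Tendsto.eventually_mem_iff_mem {X ι : Type*} [TopologicalSpace X]
    {l : Filter ι} {x : ι → X} {a : X} {U V : Set X} (hx : Tendsto x l (𝓝 a))
    (hU : IsClosed U) (hV : IsClosed V) (hUV : Disjoint U V)
    (hxUV : ∀ᶠ k in l, x k ∈ U ∪ V) : ∀ᶠ k in l, (x k ∈ U ↔ a ∈ U) := by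
  by_cases ha : a ∈ U
  · filter_upwards [hxUV, hx (hV.isOpen_compl.mem_nhds (hUV.notMem_of_mem_left ha))]
      with k hk hkV
    exact iff_of_true (hk.resolve_right hkV) ha
  · filter_upwards [hx (hU.isOpen_compl.mem_nhds ha)] with k hk
    exact iff_of_false hk ha

namespace Polynomial

section Field

variable {K ι : Type*} [Field K] [Fintype ι]

theorem roots_prod_univ_X_sub_C (w : ι → K) :
    (∏ i, (X - C (w i))).roots = univ.val.map w := by
  rw [← roots_multiset_prod_X_sub_C (univ.val.map w), Multiset.map_map]
  rfl

theorem card_filter_roots_prod_univ_X_sub_C (w : ι → K) (P : K → Prop) [DecidablePred P] :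
    Multiset.card ((∏ i, (X - C (w i))).roots.filter P) = #{i | P (w i)} := by
  rw [roots_prod_univ_X_sub_C, Multiset.filter_map, Multiset.card_map]
  rfl

theorem exists_eq_prod_X_sub_C [IsAlgClosed K] {p : K[X]} {n : ℕ} (hp : p.Monic)
    (hn : p.natDegree = n) : ∃ w : Fin n → K, p = ∏ i, (X - C (w i)) := by
  obtain ⟨w, hw⟩ :=
    Multiset.exists_eq_map_univ_fin (IsAlgClosed.card_roots_eq_natDegree.trans hn)
  refine ⟨w, ?_⟩
  rw [← prod_multiset_X_sub_C_of_monic_of_roots_card_eq hp IsAlgClosed.card_roots_eq_natDegree,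
    hw, Multiset.map_map]
  rfl

end Field

theorem eq_prod_X_sub_C_of_tendsto {K ι σ : Type*} [NormedField K] [Infinite K] [Fintype σ]
    {l : Filter ι} [l.NeBot] {v : ι → σ → K} {w : σ → K} {q : K[X]} (hv : Tendsto v l (𝓝 w))
    (hq : ∀ z, Tendsto (fun k => (∏ i, (X - C (v k i))).eval z) l (𝓝 (q.eval z))) :
    q = ∏ i, (X - C (w i)) := by
  refine Polynomial.funext fun z => tendsto_nhds_unique (hq z) ?_
  simp only [eval_prod, eval_sub, eval_X, eval_C]
  exact tendsto_finsetProd _ fun i _ => tendsto_const_nhds.sub (tendsto_pi_nhds.1 hv i)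

theorem continuous_card_filter_roots {α K : Type*} [TopologicalSpace α]
    [FirstCountableTopology α] [NormedField K] [IsAlgClosed K] {n : ℕ} {p : α → K[X]}
    (hp : ∀ z, Continuous fun x => (p x).eval z) (hmonic : ∀ x, (p x).Monic)
    (hdeg : ∀ x, (p x).natDegree = n) {U V : Set K} [DecidablePred (· ∈ U)]
    (hU : IsCompact U) (hV : IsCompact V) (hUV : Disjoint U V)
    (hroots : ∀ x, ∀ z ∈ (p x).roots, z ∈ U ∪ V) :
    Continuous fun x => Multiset.card ((p x).roots.filter (· ∈ U)) := by
  refine continuous_iff_continuousAt.2 fun x => tendsto_of_subseq_tendsto fun xs hxs => ?_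
  choose v hv using fun k => exists_eq_prod_X_sub_C (hmonic (xs k)) (hdeg (xs k))
  have hvUV : ∀ k i, v k i ∈ U ∪ V := fun k i => hroots _ _ <| by
    rw [hv k, roots_prod_univ_X_sub_C]
    exact Multiset.mem_map_of_mem _ (mem_univ_val i)
  obtain ⟨w, -, φ, hφ, hvw⟩ := (isCompact_univ_pi fun _ => hU.union hV).tendsto_subseq
    (x := v) fun k => Set.mem_univ_pi.2 (hvUV k)
  have hpx : p x = ∏ i, (X - C (w i)) := eq_prod_X_sub_C_of_tendsto hvw fun z => by
    simpa only [Function.comp_def, hv] using ((hp z).tendsto x).comp (hxs.comp hφ.tendsto_atTop)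
  have hsame : ∀ᶠ k in atTop, ∀ i, (v (φ k) i ∈ U ↔ w i ∈ U) := eventually_all.2 fun i =>
    (tendsto_pi_nhds.1 hvw i).eventually_mem_iff_mem hU.isClosed hV.isClosed hUV
      (Eventually.of_forall fun k => hvUV _ i)
  refine ⟨φ, tendsto_const_nhds.congr' ?_⟩
  filter_upwards [hsame] with k hk
  simp only [hv, hpx, card_filter_roots_prod_univ_X_sub_C, hk]

end Polynomial

namespace Matrix

variable {n K : Type*} [DecidableEq n]

theorem continuous_eval_charpoly [Fintype n] {α R : Type*} [TopologicalSpace α] [CommRing R]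
    [TopologicalSpace R] [IsTopologicalRing R] {M : α → Matrix n n R} (hM : Continuous M) (z : R) :
    Continuous fun x => (M x).charpoly.eval z := by
  simp only [eval_charpoly]
  exact (continuous_const.sub hM).matrix_det

section NormedField

variable [NormedField K]

def scaleOffDiag (A : Matrix n n K) (c : K) : Matrix n n K :=
  of fun i j => if i = j then A i i else c * A i j

@[simp]
theorem scaleOffDiag_zero (A : Matrix n n K) : A.scaleOffDiag 0 = diagonal A.diag := by
  ext i j
  by_cases h : i = j <;> simp [scaleOffDiag, diagonal, h]

@[simp]
theorem scaleOffDiag_one (A : Matrix n n K) : A.scaleOffDiag 1 = A := by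
  ext i j
  by_cases h : i = j <;> simp [scaleOffDiag, h]

theorem continuous_scaleOffDiag (A : Matrix n n K) : Continuous A.scaleOffDiag :=
  continuous_matrix fun i j => by
    by_cases h : i = j <;> simp only [scaleOffDiag, of_apply, h, if_true, if_false] <;> fun_prop

variable [Fintype n]

def gershgorinDisk (A : Matrix n n K) (i : n) : Set K :=
  Metric.closedBall (A i i) (∑ j ∈ univ.erase i, ‖A i j‖)

theorem diag_mem_gershgorinDisk (A : Matrix n n K) (i : n) : A i i ∈ A.gershgorinDisk i :=
  Metric.mem_closedBall_self (sum_nonneg fun _ _ => norm_nonneg _)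

theorem exists_mem_gershgorinDisk_of_mem_roots_charpoly {A : Matrix n n K} {z : K}
    (hz : z ∈ A.charpoly.roots) : ∃ i, z ∈ A.gershgorinDisk i := by
  refine eigenvalue_mem_ball (Module.End.hasEigenvalue_iff_mem_spectrum.2 ?_)
  rw [spectrum_toLin', mem_spectrum_iff_isRoot_charpoly]
  exact isRoot_of_mem_roots hz

theorem diag_mem_biUnion_gershgorinDisk_iff {A : Matrix n n K} {S : Finset n}
    (hS : Disjoint (⋃ i ∈ S, A.gershgorinDisk i) (⋃ i ∈ univ \ S, A.gershgorinDisk i)) (i : n) :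
    A i i ∈ ⋃ j ∈ S, A.gershgorinDisk j ↔ i ∈ S := by
  refine ⟨fun hi => by_contra fun hiS => hS.notMem_of_mem_left hi ?_,
    fun hi => Set.mem_biUnion hi (A.diag_mem_gershgorinDisk i)⟩
  exact Set.mem_biUnion (mem_sdiff.2 ⟨mem_univ i, hiS⟩) (A.diag_mem_gershgorinDisk i)

theorem gershgorinDisk_scaleOffDiag_subset (A : Matrix n n K) {c : K} (hc : ‖c‖ ≤ 1) (i : n) :
    (A.scaleOffDiag c).gershgorinDisk i ⊆ A.gershgorinDisk i := by
  have hdiag : A.scaleOffDiag c i i = A i i := by simp [scaleOffDiag]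
  rw [gershgorinDisk, gershgorinDisk, hdiag]
  refine Metric.closedBall_subset_closedBall (sum_le_sum fun j hj => ?_)
  rw [scaleOffDiag, of_apply, if_neg (ne_of_mem_erase hj).symm, norm_mul]
  exact mul_le_of_le_one_left (norm_nonneg _) hc

end NormedField

end Matrix

open Classical in
/-- Counting version of the Gershgorin circle theorem: if the union of the Gershgorin disks
indexed by a set `S` is disjoint from the union of the remaining disks, then it contains
exactly `S.card` eigenvalues (roots of the characteristic polynomial) counted with
algebraic multiplicity. -/
theorem gershgorin_counting
    (n : ℕ) (A : Matrix (Fin n) (Fin n) ℂ) (S : Finset (Fin n))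
    (hdisj :
      (⋃ i ∈ S, Metric.closedBall (A i i) (∑ j ∈ Finset.univ.erase i, ‖A i j‖)) ∩
        (⋃ i ∈ Finset.univ \ S,
          Metric.closedBall (A i i) (∑ j ∈ Finset.univ.erase i, ‖A i j‖)) = ∅) :
    (A.charpoly.roots.filter
        (fun z : ℂ =>
          z ∈ ⋃ i ∈ S,
            Metric.closedBall (A i i) (∑ j ∈ Finset.univ.erase i, ‖A i j‖))).card
      = S.card := by
  change Multiset.card (A.charpoly.roots.filter (· ∈ ⋃ i ∈ S, A.gershgorinDisk i)) = #S
  set U := ⋃ i ∈ S, A.gershgorinDisk i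
  set V := ⋃ i ∈ univ \ S, A.gershgorinDisk i
  have hUV : Disjoint U V := Set.disjoint_iff_inter_eq_empty.2 hdisj
  have hU : IsCompact U := S.isCompact_biUnion fun i _ => isCompact_closedBall _ _
  have hV : IsCompact V := (univ \ S).isCompact_biUnion fun i _ => isCompact_closedBall _ _
  let p : unitInterval → ℂ[X] := fun t => (A.scaleOffDiag (t : ℂ)).charpoly
  have hroots : ∀ t, ∀ z ∈ (p t).roots, z ∈ U ∪ V := by
    intro t z hz
    obtain ⟨i, hi⟩ := exists_mem_gershgorinDisk_of_mem_roots_charpoly hz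
    have ht : ‖(t : ℂ)‖ ≤ 1 := by rw [Complex.norm_real, Real.norm_of_nonneg t.2.1]; exact t.2.2
    have hi' := A.gershgorinDisk_scaleOffDiag_subset ht i hi
    by_cases hiS : i ∈ S
    · exact Or.inl (Set.mem_biUnion hiS hi')
    · exact Or.inr (Set.mem_biUnion (mem_sdiff.2 ⟨mem_univ i, hiS⟩) hi')
  have hp : ∀ z, Continuous fun t => (p t).eval z := fun z =>
    continuous_eval_charpoly (A.continuous_scaleOffDiag.comp (by fun_prop)) z
  have hcount := PreconnectedSpace.constant inferInstance
    (continuous_card_filter_roots hp (fun _ => charpoly_monic _)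
      (fun _ => charpoly_natDegree_eq_dim _) hU hV hUV hroots) (x := 0) (y := 1)
  simp only [p, Set.Icc.coe_zero, Set.Icc.coe_one, Complex.ofReal_zero, Complex.ofReal_one,
    scaleOffDiag_zero, scaleOffDiag_one, charpoly_diagonal, card_filter_roots_prod_univ_X_sub_C,
    diag_apply] at hcount
  rw [← hcount, filter_congr fun i _ => diag_mem_biUnion_gershgorinDisk_iff hUV i]
  simp
end

section
/- Let m ≥ 1 and let l : (Fin m → ℝ) → ℂ be continuous, and suppose there exists l_min > 0 with l_min ≤ ‖l ξ‖ for all ξ, and that ‖l ξ‖ → ∞ along the cocompact filter on Fin m → ℝ. Let 0 < d ≤ b be reals. Then for every ε > 0 there exists η > 0 such that for all q, q' ∈ [d, b] with |q − q'| ≤ η and every n : Fin m → ℤ, ‖(l ((2q)⁻¹ • (fun i => (n i : ℝ))))⁻¹ − (l ((2q')⁻¹ • (fun i => (n i : ℝ))))⁻¹‖ ≤ ε. -/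
/-!
The entries are the values of `φ (q, ξ) = l ((2q)⁻¹ • ξ)⁻¹` on `[d, b] × ℤ^m`. Since `[d, b]` is
compact and `‖(2q)⁻¹ • ξ‖ ≥ ‖ξ‖ / (2b)`, the continuous map `φ` vanishes at infinity on the product
`[d, b] × ℝ^m`, hence is uniformly continuous there (Heine–Cantor); uniform continuity in the
product metric is exactly continuity in `q` uniformly in `ξ`.
-/

open Filter Topology Bornology

theorem Filter.cocompact_prod_eq_comap_snd {X Y : Type*} [TopologicalSpace X] [TopologicalSpace Y]
    [CompactSpace X] : cocompact (X × Y) = comap Prod.snd (cocompact Y) := by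
  rw [← coprod_cocompact, cocompact_eq_bot, bot_coprod]

theorem UniformContinuous.uniformEquicontinuous_curry_swap {X Y Z : Type*} [UniformSpace X]
    [UniformSpace Y] [UniformSpace Z] {f : X × Y → Z} (hf : UniformContinuous f) :
    UniformEquicontinuous fun y x => f (x, y) := by
  intro U hU
  have hfU := hf hU
  rw [mem_map, uniformity_prod_eq_comap_prod, mem_comap] at hfU
  obtain ⟨T, hT, hTU⟩ := hfU
  obtain ⟨A, hA, B, hB, hAB⟩ := mem_prod_iff.1 hT
  filter_upwards [hA] with xx' hxx' y
  exact hTU (a := ((xx'.1, y), (xx'.2, y))) (hAB ⟨hxx', refl_mem_uniformity hB⟩)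

theorem tendsto_smul_comap_snd_cobounded {X 𝕜 E : Type*} [NormedField 𝕜] [NormedAddCommGroup E]
    [NormedSpace 𝕜 E] {c : X → 𝕜} {r : ℝ} (hr : 0 < r) (hc : ∀ x, r ≤ ‖c x‖) :
    Tendsto (fun p : X × E => c p.1 • p.2) (comap Prod.snd (cobounded E)) (cobounded E) := by
  rw [← tendsto_norm_atTop_iff_cobounded]
  have hrE : Tendsto (fun p : X × E => r * ‖p.2‖) (comap Prod.snd (cobounded E)) atTop :=
    (tendsto_norm_cobounded_atTop.comp tendsto_comap).const_mul_atTop hr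
  refine tendsto_atTop_mono (fun p => ?_) hrE
  rw [norm_smul]
  gcongr
  exact hc p.1

theorem tendsto_inv_nhds_zero_of_tendsto_norm_atTop {α 𝕜 : Type*} [NormedDivisionRing 𝕜]
    {f : α → 𝕜} {l : Filter α} (hf : Tendsto (‖f ·‖) l atTop) :
    Tendsto (fun a => (f a)⁻¹) l (𝓝 0) :=
  tendsto_inv₀_cobounded.comp (tendsto_norm_atTop_iff_cobounded.1 hf)

theorem inverse_diagonal_entries_uniformly_continuous_general
    (m : ℕ)
    (l : (Fin m → ℝ) → ℂ) (hl : Continuous l)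
    (lmin : ℝ) (hlmin : 0 < lmin) (hlb : ∀ ξ : Fin m → ℝ, lmin ≤ ‖l ξ‖)
    (hcoc : Filter.Tendsto (fun ξ : Fin m → ℝ => ‖l ξ‖)
      (Filter.cocompact (Fin m → ℝ)) Filter.atTop)
    (d b : ℝ) (hd : 0 < d) (hdb : d ≤ b) :
    ∀ ε > (0 : ℝ), ∃ η > (0 : ℝ), ∀ q q' : ℝ,
      q ∈ Set.Icc d b → q' ∈ Set.Icc d b → |q - q'| ≤ η →
      ∀ n : Fin m → ℤ,
        ‖(l ((2 * q)⁻¹ • fun i => (n i : ℝ)))⁻¹ -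
            (l ((2 * q')⁻¹ • fun i => (n i : ℝ)))⁻¹‖ ≤ ε := by
  intro ε hε
  let φ : Set.Icc d b × (Fin m → ℝ) → ℂ := fun p => (l ((2 * (p.1 : ℝ))⁻¹ • p.2))⁻¹
  have hl_ne : ∀ ξ, l ξ ≠ 0 := fun ξ => norm_pos_iff.1 (hlmin.trans_le (hlb ξ))
  have hφ_cont : Continuous φ := by
    have h2q : ∀ p : Set.Icc d b × (Fin m → ℝ), 2 * (p.1 : ℝ) ≠ 0 := fun p => by
      linarith [p.1.2.1]
    fun_prop (disch := first | exact fun _ => hl_ne _ | exact h2q)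
  have hscale : ∀ q : Set.Icc d b, (2 * b)⁻¹ ≤ ‖(2 * (q : ℝ))⁻¹‖ := fun q => by
    rw [norm_inv, Real.norm_of_nonneg (by linarith [q.2.1])]
    gcongr
    exacts [by linarith [q.2.1], q.2.2]
  have hφ_zero : Tendsto φ (cocompact (Set.Icc d b × (Fin m → ℝ))) (𝓝 0) := by
    rw [cocompact_prod_eq_comap_snd, ← Metric.cobounded_eq_cocompact]
    refine tendsto_inv_nhds_zero_of_tendsto_norm_atTop (hcoc.comp ?_)
    rw [← Metric.cobounded_eq_cocompact]
    exact tendsto_smul_comap_snd_cobounded (inv_pos.2 (by linarith)) hscale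
  obtain ⟨δ, hδ, hφδ⟩ := Metric.uniformEquicontinuous_iff.1
    (UniformContinuous.uniformEquicontinuous_curry_swap
      (hφ_cont.uniformContinuous_of_tendsto_cocompact hφ_zero)) ε hε
  refine ⟨δ / 2, by positivity, fun q q' hq hq' hqq' n => ?_⟩
  have hqδ : dist (⟨q, hq⟩ : Set.Icc d b) ⟨q', hq'⟩ < δ := by
    rw [Subtype.dist_eq, Real.dist_eq]
    linarith
  have hφn := hφδ _ _ hqδ fun i => (n i : ℝ)
  rw [dist_eq_norm] at hφn
  exact hφn.le

/-- Uniform (in the index `n`) continuity in `q ∈ [d, b]` of the entries `l(n/(2q))⁻¹` of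
the inverse diagonal operators `L_q⁻¹`, for a continuous symbol `l` bounded below in norm
and blowing up at infinity. -/
theorem inverse_diagonal_entries_uniformly_continuous
    (m : ℕ) (hm : 1 ≤ m)
    (l : (Fin m → ℝ) → ℂ) (hl : Continuous l)
    (lmin : ℝ) (hlmin : 0 < lmin) (hlb : ∀ ξ : Fin m → ℝ, lmin ≤ ‖l ξ‖)
    (hcoc : Filter.Tendsto (fun ξ : Fin m → ℝ => ‖l ξ‖)
      (Filter.cocompact (Fin m → ℝ)) Filter.atTop)
    (d b : ℝ) (hd : 0 < d) (hdb : d ≤ b) :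
    ∀ ε > (0 : ℝ), ∃ η > (0 : ℝ), ∀ q q' : ℝ,
      q ∈ Set.Icc d b → q' ∈ Set.Icc d b → |q - q'| ≤ η →
      ∀ n : Fin m → ℤ,
        ‖(l ((2 * q)⁻¹ • fun i => (n i : ℝ)))⁻¹ -
            (l ((2 * q')⁻¹ • fun i => (n i : ℝ)))⁻¹‖ ≤ ε :=
  inverse_diagonal_entries_uniformly_continuous_general m l hl lmin hlmin hlb hcoc d b hd hdb
end
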